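/- For every integer x ≥ 1, G⁻¹(x) = ∑_{d=1}^{x} λ(d) · C_Ω(d) · M(⌊x/d⌋). -/

import Mathlib

/-- `C_Ω(n) = Ω(n)! / (α₁! ⋯ α_r!)` is the multinomial coefficient of the exponents in the
prime factorization `n = p₁^{α₁} ⋯ p_r^{α_r}`; by convention `C_Ω(1) = 1`. -/
noncomputable def COmega (n : ℕ) : ℝ :=
  ((ArithmeticFunction.cardFactors n).factorial : ℝ) /
    ∏ p ∈ n.primeFactors, ((n.factorization p).factorial : ℝ)

/-!
Write `g = ω + ζ` and `ω = 𝟙_P * ζ` with `𝟙_P` the indicator of the primes, so that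
`g = (1 + 𝟙_P) * ζ`. The multinomial recurrence `C_Ω(n) = ∑_{p ∣ n} C_Ω(n / p)` says exactly
that `λ · C_Ω` is the Dirichlet inverse of `1 + 𝟙_P`, hence `g⁻¹ = μ * (λ · C_Ω)`, and summing a
Dirichlet convolution over `n ≤ x` gives the stated formula.
-/

open ArithmeticFunction Finset
open scoped Nat ArithmeticFunction.Omega ArithmeticFunction.omega ArithmeticFunction.Moebius
  ArithmeticFunction.zeta

namespace Finsupp

theorem multinomial_eq_sum_multinomial_tsub_single {α : Type*} {f : α →₀ ℕ} (hf : f ≠ 0) :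
    f.multinomial = ∑ a ∈ f.support, (f - single a 1).multinomial := by
  classical
  set s := f.support
  have hterm : ∀ a ∈ s,
      (∏ i ∈ s, (f i)!) * (f - single a 1).multinomial = f a * ((∑ i ∈ s, f i) - 1)! := by
    intro a ha
    set g := f - single a 1
    have hfa : f a ≠ 0 := mem_support_iff.mp ha
    have hga : g a = f a - 1 := by simp [g]
    have hrest : ∀ i ∈ s.erase a, g i = f i := fun i hi => by
      simp [g, Ne.symm (Finset.ne_of_mem_erase hi)]
    have hsum : ∑ i ∈ s, g i = (∑ i ∈ s, f i) - 1 := by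
      have hgs := Finset.add_sum_erase s g ha
      have hfs := Finset.add_sum_erase s (⇑f) ha
      rw [Finset.sum_congr rfl hrest, hga] at hgs
      rw [← hgs, ← hfs, Nat.sub_add_comm (Nat.one_le_iff_ne_zero.mpr hfa)]
    have hprod : ∏ i ∈ s, (f i)! = f a * ∏ i ∈ s, (g i)! := by
      have hprod_erase : ∏ i ∈ s.erase a, (g i)! = ∏ i ∈ s.erase a, (f i)! :=
        Finset.prod_congr rfl fun i hi => by rw [hrest i hi]
      rw [← Finset.mul_prod_erase s _ ha, ← Finset.mul_prod_erase s (fun i => (g i)!) ha,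
        hprod_erase, hga, ← mul_assoc, Nat.mul_factorial_pred hfa]
    rw [multinomial_eq_of_support_subset (support_tsub : g.support ⊆ s), hprod, mul_assoc,
      Nat.multinomial_spec, hsum]
  have hS : ∑ i ∈ s, f i ≠ 0 := by
    obtain ⟨a, ha⟩ := support_nonempty_iff.mpr hf
    exact (Finset.sum_pos' (fun _ _ => Nat.zero_le _)
      ⟨a, ha, Nat.pos_of_ne_zero (mem_support_iff.mp ha)⟩).ne'
  refine Nat.eq_of_mul_eq_mul_left (Nat.prod_factorial_pos s f) ?_
  rw [Finset.mul_sum, Finset.sum_congr rfl hterm, ← Finset.sum_mul, multinomial_eq,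
    Nat.multinomial_spec, Nat.mul_factorial_pred hS]

end Finsupp

theorem COmega_eq_multinomial (n : ℕ) : COmega n = n.factorization.multinomial := by
  rw [COmega, Finsupp.multinomial_eq, Nat.support_factorization, Nat.multinomial,
    Nat.cast_div (Nat.prod_factorial_dvd_factorial_sum _ _)
      (by exact_mod_cast (Nat.prod_factorial_pos _ _).ne'),
    cardFactors_eq_sum_factorization, Finsupp.sum, Nat.support_factorization]
  push_cast
  rfl

theorem COmega_eq_sum_COmega_div {n : ℕ} (hn : 1 < n) :
    COmega n = ∑ p ∈ n.primeFactors, COmega (n / p) := by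
  have hf : n.factorization ≠ 0 := by
    rw [Ne, Nat.factorization_eq_zero_iff']
    omega
  simp only [COmega_eq_multinomial]
  rw [Finsupp.multinomial_eq_sum_multinomial_tsub_single hf, Nat.support_factorization]
  push_cast
  refine sum_congr rfl fun p hp => ?_
  rw [Nat.factorization_div (Nat.dvd_of_mem_primeFactors hp),
    (Nat.prime_of_mem_primeFactors hp).factorization]

theorem Nat.div_ne_zero_of_mem_primeFactors {n p : ℕ} (hp : p ∈ n.primeFactors) : n / p ≠ 0 :=
  (Nat.div_pos (Nat.le_of_mem_primeFactors hp) (Nat.pos_of_mem_primeFactors hp)).ne'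

namespace ArithmeticFunction

theorem cardFactors_div_add_one {n p : ℕ} (hp : p ∈ n.primeFactors) : Ω (n / p) + 1 = Ω n := by
  have hp' := Nat.prime_of_mem_primeFactors hp
  conv_rhs => rw [← Nat.div_mul_cancel (Nat.dvd_of_mem_primeFactors hp)]
  rw [cardFactors_mul (Nat.div_ne_zero_of_mem_primeFactors hp) hp'.ne_zero,
    cardFactors_apply_prime hp']

section PrimeIndicator

variable {R : Type*} [Semiring R]

def primeIndicator : ArithmeticFunction R :=
  ⟨fun n => if n.Prime then 1 else 0, by simp [Nat.not_prime_zero]⟩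

theorem primeIndicator_apply (n : ℕ) :
    (primeIndicator : ArithmeticFunction R) n = if n.Prime then 1 else 0 := rfl

theorem primeIndicator_mul_apply (f : ArithmeticFunction R) (n : ℕ) :
    (primeIndicator * f : ArithmeticFunction R) n = ∑ p ∈ n.primeFactors, f (n / p) := by
  rw [mul_apply, Nat.sum_divisorsAntidiagonal fun d e => primeIndicator d * f e]
  simp only [primeIndicator_apply, ite_mul, one_mul, zero_mul]
  rw [← sum_filter]
  congr 1
  ext p
  simp only [mem_filter, Nat.mem_divisors, Nat.mem_primeFactors]
  tauto

theorem cardDistinctFactors_eq_primeIndicator_mul_zeta :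
    (ω : ArithmeticFunction R) = primeIndicator * (ζ : ArithmeticFunction R) := by
  ext n
  have hζ : ∀ p ∈ n.primeFactors, (ζ : ArithmeticFunction R) (n / p) = 1 := fun p hp => by
    rw [natCoe_apply, zeta_apply_ne (Nat.div_ne_zero_of_mem_primeFactors hp), Nat.cast_one]
  rw [primeIndicator_mul_apply _ n, sum_congr rfl hζ, sum_const, nsmul_one, natCoe_apply,
    cardDistinctFactors_apply, Nat.primeFactors, List.card_toFinset]

end PrimeIndicator

noncomputable def liouvilleCOmega : ArithmeticFunction ℝ :=
  ⟨fun n => if n = 0 then 0 else (-1) ^ Ω n * COmega n, if_pos rfl⟩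

theorem liouvilleCOmega_apply {n : ℕ} (hn : n ≠ 0) :
    liouvilleCOmega n = (-1) ^ Ω n * COmega n :=
  if_neg hn

theorem one_add_primeIndicator_mul_liouvilleCOmega :
    (1 + primeIndicator : ArithmeticFunction ℝ) * liouvilleCOmega = 1 := by
  ext n
  rcases eq_or_ne n 0 with rfl | hn
  · simp
  rw [add_mul, one_mul, add_apply, primeIndicator_mul_apply _ n]
  rcases eq_or_ne n 1 with rfl | hn1
  · simp [liouvilleCOmega_apply, COmega]
  have hsign : ∀ p ∈ n.primeFactors,
      liouvilleCOmega (n / p) = -(-1) ^ Ω n * COmega (n / p) := by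
    intro p hp
    rw [liouvilleCOmega_apply (Nat.div_ne_zero_of_mem_primeFactors hp),
      ← cardFactors_div_add_one hp, pow_succ]
    ring
  rw [sum_congr rfl hsign, ← mul_sum, ← COmega_eq_sum_COmega_div (by omega),
    liouvilleCOmega_apply hn, one_apply_ne hn1]
  ring

end ArithmeticFunction

theorem stmt_12_general (g ginv : ArithmeticFunction ℝ)
    (hg : ∀ n : ℕ, 0 < n → g n = (ArithmeticFunction.cardDistinctFactors n : ℝ) + 1)
    (hginv : g * ginv = 1) (x : ℕ) :
    (∑ n ∈ Finset.Icc 1 x, ginv n) =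
      ∑ d ∈ Finset.Icc 1 x,
        (-1 : ℝ) ^ (ArithmeticFunction.cardFactors d) * COmega d *
          ∑ n ∈ Finset.Icc 1 (x / d), (ArithmeticFunction.moebius n : ℝ) := by
  have hg_eq : g = (1 + primeIndicator : ArithmeticFunction ℝ) * ζ := by
    rw [add_mul, one_mul, ← cardDistinctFactors_eq_primeIndicator_mul_zeta, add_comm]
    ext n
    rcases eq_or_ne n 0 with rfl | hn
    · simp
    simp [hg n (Nat.pos_of_ne_zero hn), natCoe_apply, hn]
  have hginv_eq : ginv = μ * liouvilleCOmega := by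
    refine inv_unique hginv ?_
    rw [hg_eq, mul_assoc, ← mul_assoc (ζ : ArithmeticFunction ℝ), coe_zeta_mul_coe_moebius,
      one_mul, one_add_primeIndicator_mul_liouvilleCOmega]
  have hIcc : ∀ m, Icc 1 m = Ioc 0 m := Icc_add_one_left_eq_Ioc 0
  simp only [hIcc]
  rw [hginv_eq, mul_comm, sum_Ioc_mul_eq_sum_sum]
  refine sum_congr rfl fun d hd => ?_
  rw [liouvilleCOmega_apply (mem_Ioc.mp hd).1.ne']
  simp only [intCoe_apply]

/-- Let `g` be the arithmetic function with `g(n) = ω(n) + 1` for `n ≥ 1`,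
let `ginv` be its Dirichlet inverse (characterized by `g * ginv = 1`), and let
`G⁻¹(x) = ∑_{n ≤ x} ginv(n)`.  Then for every `x ≥ 1`,
`G⁻¹(x) = ∑_{d=1}^{x} λ(d) · C_Ω(d) · M(⌊x/d⌋)`, where `λ(d) = (−1)^{Ω(d)}` is the
Liouville function and `M` is the Mertens function. -/
theorem stmt_12 (g ginv : ArithmeticFunction ℝ)
    (hg : ∀ n : ℕ, 0 < n → g n = (ArithmeticFunction.cardDistinctFactors n : ℝ) + 1)
    (hginv : g * ginv = 1) (x : ℕ) (hx : 1 ≤ x) :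
    (∑ n ∈ Finset.Icc 1 x, ginv n) =
      ∑ d ∈ Finset.Icc 1 x,
        (-1 : ℝ) ^ (ArithmeticFunction.cardFactors d) * COmega d *
          ∑ n ∈ Finset.Icc 1 (x / d), (ArithmeticFunction.moebius n : ℝ) :=
  stmt_12_general g ginv hg hginv x
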